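/- For real x ∈ [1/3, 1), the sequence of iterates Bl^n(x) of Bl(x) = (x² + 1/3)/(1 + x²/3) is strictly increasing and converges to 1. -/

import Mathlib

/-!
Since `BlR x - x = (1 - x)³ / (3 + x²)` and `1 - BlR x = 2 (1 - x²) / (3 + x²)`, the map `BlR`
sends `[1/3, 1)` into itself and moves every point of it strictly to the right, so an orbit
started there increases and is bounded by `1`. Its limit is a fixed point of the continuous
map `BlR`, and by the first identity `1` is the only one.
-/

open Filter

/-- The restriction of the parabolic Blaschke product to the real line. -/
noncomputable def BlR : ℝ → ℝ := fun x => (x ^ 2 + 1 / 3) / (1 + x ^ 2 / 3)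

open Function Set Topology

theorem strictMono_iterate_of_mapsTo_of_lt_map {α : Type*} [Preorder α] {f : α → α} {s : Set α}
    (hs : MapsTo f s s) (hlt : ∀ y ∈ s, y < f y) {x : α} (hx : x ∈ s) :
    StrictMono fun n : ℕ => f^[n] x :=
  strictMono_nat_of_lt_succ fun n => by
    rw [iterate_succ_apply']
    exact hlt _ (hs.iterate n hx)

theorem tendsto_iterate_of_monotone_of_bddAbove {α : Type*} [ConditionallyCompleteLinearOrder α]
    [TopologicalSpace α] [OrderTopology α] {f : α → α} (hf : Continuous f) {x a : α}
    (hmono : Monotone fun n : ℕ => f^[n] x) (hbdd : BddAbove (range fun n : ℕ => f^[n] x))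
    (hfix : ∀ y, IsFixedPt f y → y = a) :
    Tendsto (fun n : ℕ => f^[n] x) atTop (𝓝 a) := by
  have hlim := tendsto_atTop_ciSup hmono hbdd
  rwa [hfix _ (isFixedPt_of_tendsto_iterate hlim hf.continuousAt)] at hlim

namespace BlR

theorem apply_eq_div (x : ℝ) : BlR x = 3 * (x ^ 2 + 1 / 3) / (3 + x ^ 2) := by
  rw [BlR, ← mul_div_mul_left _ (1 + x ^ 2 / 3) three_ne_zero]
  ring_nf

theorem apply_sub_self (x : ℝ) : BlR x - x = (1 - x) ^ 3 / (3 + x ^ 2) := by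
  rw [apply_eq_div, div_sub' (by positivity)]
  ring_nf

theorem one_sub_apply (x : ℝ) : 1 - BlR x = 2 * (1 - x ^ 2) / (3 + x ^ 2) := by
  rw [apply_eq_div, one_sub_div (by positivity)]
  ring_nf

theorem one_third_le_apply (x : ℝ) : 1 / 3 ≤ BlR x := by
  rw [apply_eq_div, le_div_iff₀ (by positivity)]
  nlinarith [sq_nonneg x]

theorem self_lt_apply_of_lt_one {x : ℝ} (hx : x < 1) : x < BlR x := by
  rw [← sub_pos, apply_sub_self]
  have : 0 < 1 - x := by linarith
  positivity

theorem apply_lt_one_of_abs_lt_one {x : ℝ} (hx : |x| < 1) : BlR x < 1 := by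
  rw [← sub_pos, one_sub_apply]
  have : 0 < 1 - x ^ 2 := by nlinarith [sq_abs x, abs_nonneg x]
  positivity

theorem isFixedPt_iff {x : ℝ} : IsFixedPt BlR x ↔ x = 1 := by
  rw [IsFixedPt, ← sub_eq_zero, apply_sub_self, div_eq_zero_iff, or_iff_left (by positivity),
    pow_eq_zero_iff three_ne_zero, sub_eq_zero, eq_comm]

theorem continuous : Continuous BlR :=
  Continuous.div (by fun_prop) (by fun_prop) fun x => by positivity

theorem mapsTo_Ico : MapsTo BlR (Ico (1 / 3) 1) (Ico (1 / 3) 1) := fun x hx =>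
  ⟨one_third_le_apply x, apply_lt_one_of_abs_lt_one (abs_lt.2 ⟨by linarith [hx.1], hx.2⟩)⟩

end BlR

/-- For `x ∈ [1/3, 1)` the iterates `BlR^[n] x` strictly increase to `1`. -/
theorem BlR_iterates_increase_to_one (x : ℝ) (hx : x ∈ Set.Ico (1 / 3 : ℝ) 1) :
    StrictMono (fun n : ℕ => BlR^[n] x) ∧
    Tendsto (fun n : ℕ => BlR^[n] x) atTop (nhds 1) := by
  have hmono := strictMono_iterate_of_mapsTo_of_lt_map BlR.mapsTo_Ico
    (fun y hy => BlR.self_lt_apply_of_lt_one hy.2) hx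
  have hbdd : BddAbove (range fun n : ℕ => BlR^[n] x) := by
    refine ⟨1, ?_⟩
    rintro _ ⟨n, rfl⟩
    exact (BlR.mapsTo_Ico.iterate n hx).2.le
  exact ⟨hmono, tendsto_iterate_of_monotone_of_bddAbove BlR.continuous hmono.monotone hbdd
    fun _ => BlR.isFixedPt_iff.1⟩
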